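/- Suppose G_1, …, G_m are finite subgraphs of the infinite path Path_ℤ with G_1 ∪ ⋯ ∪ G_m = Path_k (k ≥ 1), and let g := gap(G_1,…,G_m). Then g > 0 and: (i) Δ⃗(G_1,…,G_m) ≥ k/(2g); (ii) for every j ∈ {1,…,m}, Δ⃗(G_j, G_1, …, G_{j−1}, G_{j+1}, …, G_m) ≥ (k − λ(G_j)·Δ(G_j))/(4g). -/

import Mathlib

/-!
Let `H` be the union of the residual pieces `G_j ⊖ (G_1 ∪ ⋯ ∪ G_{j-1})` and `g` its gap. The
intervals `[m - g, m + g]` around the midpoints `m` of the components of `H` cover `[0, k]`, so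
`k ≤ 2 g Δ(H)`; and `Δ(H) ≤ Δ⃗(G_1, …, G_m)` because each component of `H` is a component of one
residual piece.

For (ii), every `y ∈ [0, k]` is within `2g` of the midpoint of a component of `H` avoiding `G_j`,
or of an edge of `G_j`. Otherwise some component `c` with midpoint within `g` of `y` touches `G_j`
only far from `y`, say to the right; then `c` reaches past `y + 2g`, and the component whose
midpoint precedes that of `c` is within `2g` of `y` and touches `G_j` near `y`. Covering `[0, k]`
accordingly gives `k ≤ 4g (Δ(H ⊖ G_j) + Δ(G_j)) + λ(G_j) Δ(G_j)`, and the components of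
`H ⊖ G_j` and of `G_j` are counted separately in `Δ⃗(G_j, G_1, …)`.
-/

noncomputable section

/-- A finite subgraph of the infinite path `Path_ℤ`, identified with its (finite) edge set:
the integer `i` encodes the edge `{i-1, i}` of `Path_ℤ`. -/
abbrev PGraph := Finset ℤ

/-- The connected component of the edge `i` in `G`: all edges `j ∈ G` such that every edge
lying between `i` and `j` also belongs to `G`. -/
def comp (G : PGraph) (i : ℤ) : PGraph :=
  G.filter fun j => ∀ l ∈ Finset.Icc (min i j) (max i j), l ∈ G

/-- `Δ(G)`: the number of connected components of `G`. -/
def Delta (G : PGraph) : ℕ := (G.filter fun i => i - 1 ∉ G).card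

/-- `λ(G)`: the maximum number of edges of a connected component of `G`. -/
def lam (G : PGraph) : ℕ := G.sup fun i => (comp G i).card

/-- `G ⊖ F`: the union of the connected components of `G` that are vertex-disjoint from `F`.
(The edges `{i-1,i}` and `{f-1,f}` share a vertex iff `|i - f| ≤ 1`.) -/
def ominus (G F : PGraph) : PGraph :=
  G.filter fun i => ∀ j ∈ comp G i, ∀ f ∈ F, 1 < (j - f).natAbs

/-- `Path_k`: the subgraph of `Path_ℤ` with edges `{i-1,i}` for `1 ≤ i ≤ k`. -/
def pathk (k : ℕ) : PGraph := Finset.Icc 1 (k : ℤ)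

/-- `Δ⃗(G_1,…,G_m ∣ F)`. -/
def dvecFrom : PGraph → List PGraph → ℕ
  | _, [] => 0
  | F, G :: L => Delta (ominus G F) + dvecFrom (F ∪ G) L

/-- `Δ⃗(G_1,…,G_m)`. -/
def dvec (L : List PGraph) : ℕ := dvecFrom ∅ L

def lvecFrom : PGraph → List PGraph → ℕ
  | _, [] => 0
  | F, G :: L => lam (ominus G F) + lvecFrom (F ∪ G) L

/-- `λ⃗(G_1,…,G_m)`. -/
def lvec (L : List PGraph) : ℕ := lvecFrom ∅ L

def ldvecFrom : PGraph → List PGraph → ℕ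
  | _, [] => 0
  | F, G :: L => lam (ominus G F) * Delta (ominus G F) + ldvecFrom (F ∪ G) L

/-- `λΔ⃗(G_1,…,G_m)`. -/
def ldvec (L : List PGraph) : ℕ := ldvecFrom ∅ L

/-- The sequence `G_1, …, G_m` as a list. -/
def seqList {m : ℕ} (G : Fin m → PGraph) : List PGraph := (List.finRange m).map G

/-- `G_1 ∪ ⋯ ∪ G_{j-1}` (the union of the entries strictly before `j`). -/
def unionBelow {m : ℕ} (G : Fin m → PGraph) (j : Fin m) : PGraph :=
  (Finset.univ.filter fun i => i < j).biUnion G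

/-- A shift permutation: `σ(j) ≥ j - 1` for all `j`. -/
def IsShiftPerm {m : ℕ} (σ : Equiv.Perm (Fin m)) : Prop :=
  ∀ j : Fin m, (j : ℕ) ≤ (σ j : ℕ) + 1

/-- The midpoint `(s+t)/2` (as a real number) of the connected component `Path_{s,t}` of `H`
containing the edge `i`. -/
def midpt (H : PGraph) (i : ℤ) : ℝ :=
  (((WithTop.untopD i (comp H i).min : ℤ) : ℝ) - 1 +
    ((WithBot.unbotD i (comp H i).max : ℤ) : ℝ)) / 2

/-- The union `⋃_{j=1}^m (G_j ⊖ (G_1 ∪ ⋯ ∪ G_{j-1}))`. -/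
def residUnion {m : ℕ} (G : Fin m → PGraph) : PGraph :=
  Finset.univ.biUnion fun j => ominus (G j) (unionBelow G j)

/-- The largest distance from a point of the real interval `[0,k]` to the nearest midpoint of a
connected component of `H`. -/
def gapOf (k : ℕ) (H : PGraph) : ℝ :=
  ⨆ y : Set.Icc (0 : ℝ) (k : ℝ), sInf ((fun i => |midpt H i - (y : ℝ)|) '' (H : Set ℤ))

/-- `gap(G_1,…,G_m)` for a covering `G_1 ∪ ⋯ ∪ G_m = Path_k`. -/
def gapSeq (k : ℕ) {m : ℕ} (G : Fin m → PGraph) : ℝ := gapOf k (residUnion G)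

/-- For `i ∈ G`, the component of `i` is `Path_{compMin G i - 1, compMax G i}`; the default values
for `i ∉ G` are those used by `midpt`, so that `midpt_eq` holds by definition. -/
def compMin (G : PGraph) (i : ℤ) : ℤ := WithTop.untopD i (comp G i).min

def compMax (G : PGraph) (i : ℤ) : ℤ := WithBot.unbotD i (comp G i).max

def leftEnds (G : PGraph) : PGraph := G.filter fun i => i - 1 ∉ G

section Components

variable {G X Y : PGraph} {i j r a b : ℤ}

theorem mem_comp : j ∈ comp G i ↔ j ∈ G ∧ ∀ l, min i j ≤ l → l ≤ max i j → l ∈ G := by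
  simp [comp]

theorem comp_subset : comp G i ⊆ G := Finset.filter_subset _ _

theorem comp_mono (h : X ⊆ Y) : comp X i ⊆ comp Y i := fun j hj => by
  rw [mem_comp] at hj ⊢
  exact ⟨h hj.1, fun l h₁ h₂ => h (hj.2 l h₁ h₂)⟩

theorem mem_of_mem_comp (hj : j ∈ comp G i) : i ∈ G :=
  (mem_comp.1 hj).2 i (min_le_left i j) (le_max_left i j)

theorem mem_comp_self (h : i ∈ G) : i ∈ comp G i :=
  mem_comp.2 ⟨h, fun l h₁ h₂ => by
    rw [min_self] at h₁; rw [max_self] at h₂; rwa [le_antisymm h₂ h₁]⟩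

theorem sub_one_mem_comp (h : i ∈ G) (h' : i - 1 ∈ G) : i - 1 ∈ comp G i :=
  mem_comp.2 ⟨h', fun l h₁ h₂ => by
    rcases (by omega : l = i - 1 ∨ l = i) with rfl | rfl <;> assumption⟩

theorem compMin_le_of_mem (hj : j ∈ comp G i) : compMin G i ≤ j := by
  obtain ⟨c, hc⟩ := Finset.min_of_mem hj
  simpa [compMin, hc] using Finset.min_le_of_eq hj hc

theorem le_compMax_of_mem (hj : j ∈ comp G i) : j ≤ compMax G i := by
  obtain ⟨c, hc⟩ := Finset.max_of_mem hj
  simpa [compMax, hc] using Finset.le_max_of_eq hj hc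

theorem compMin_mem (h : i ∈ G) : compMin G i ∈ comp G i := by
  obtain ⟨c, hc⟩ := Finset.min_of_mem (mem_comp_self h)
  simpa [compMin, hc] using Finset.mem_of_min hc

theorem compMax_mem (h : i ∈ G) : compMax G i ∈ comp G i := by
  obtain ⟨c, hc⟩ := Finset.max_of_mem (mem_comp_self h)
  simpa [compMax, hc] using Finset.mem_of_max hc

theorem compMin_le (h : i ∈ G) : compMin G i ≤ i := compMin_le_of_mem (mem_comp_self h)

theorem le_compMax (h : i ∈ G) : i ≤ compMax G i := le_compMax_of_mem (mem_comp_self h)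

theorem compMin_le_compMax (h : i ∈ G) : compMin G i ≤ compMax G i :=
  (compMin_le h).trans (le_compMax h)

theorem Icc_compMin_compMax_subset (h : i ∈ G) :
    Finset.Icc (compMin G i) (compMax G i) ⊆ G := fun l hl => by
  rw [Finset.mem_Icc] at hl
  rcases le_total l i with hli | hil
  · exact (mem_comp.1 (compMin_mem h)).2 l (by omega) (by omega)
  · exact (mem_comp.1 (compMax_mem h)).2 l (by omega) (by omega)

theorem compMin_sub_one_notMem (h : i ∈ G) : compMin G i - 1 ∉ G := fun h' => by
  have hle := compMin_le h
  have hmem : compMin G i - 1 ∈ comp G i := mem_comp.2 ⟨h', fun l h₁ h₂ => by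
    rcases (by omega : l = compMin G i - 1 ∨ compMin G i ≤ l ∧ l ≤ i) with rfl | hl
    · exact h'
    · exact Icc_compMin_compMax_subset h (Finset.mem_Icc.2 ⟨hl.1, hl.2.trans (le_compMax h)⟩)⟩
  have := compMin_le_of_mem hmem
  omega

theorem compMax_add_one_notMem (h : i ∈ G) : compMax G i + 1 ∉ G := fun h' => by
  have hle := le_compMax h
  have hmem : compMax G i + 1 ∈ comp G i := mem_comp.2 ⟨h', fun l h₁ h₂ => by
    rcases (by omega : l = compMax G i + 1 ∨ i ≤ l ∧ l ≤ compMax G i) with rfl | hl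
    · exact h'
    · exact Icc_compMin_compMax_subset h (Finset.mem_Icc.2 ⟨(compMin_le h).trans hl.1, hl.2⟩)⟩
  have := le_compMax_of_mem hmem
  omega

theorem comp_eq_Icc_of (hsub : Finset.Icc a b ⊆ G) (ha : a - 1 ∉ G) (hb : b + 1 ∉ G)
    (hi : i ∈ Finset.Icc a b) : comp G i = Finset.Icc a b := by
  rw [Finset.mem_Icc] at hi
  ext j
  rw [mem_comp, Finset.mem_Icc]
  constructor
  · rintro ⟨-, hj⟩
    constructor
    · by_contra hlt
      exact ha (hj (a - 1) (by omega) (by omega))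
    · by_contra hlt
      exact hb (hj (b + 1) (by omega) (by omega))
  · intro hj
    exact ⟨hsub (Finset.mem_Icc.2 hj), fun l h₁ h₂ => hsub (Finset.mem_Icc.2 (by omega))⟩

theorem comp_eq_Icc (h : i ∈ G) : comp G i = Finset.Icc (compMin G i) (compMax G i) :=
  comp_eq_Icc_of (Icc_compMin_compMax_subset h) (compMin_sub_one_notMem h)
    (compMax_add_one_notMem h) (Finset.mem_Icc.2 ⟨compMin_le h, le_compMax h⟩)

theorem comp_eq_of_mem (hj : j ∈ comp G i) : comp G j = comp G i := by
  have hi := mem_of_mem_comp hj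
  rw [comp_eq_Icc hi] at hj ⊢
  exact comp_eq_Icc_of (Icc_compMin_compMax_subset hi) (compMin_sub_one_notMem hi)
    (compMax_add_one_notMem hi) hj

theorem compMin_congr (hi : i ∈ G) (h : comp G i = comp G j) : compMin G i = compMin G j := by
  obtain ⟨c, hc⟩ := Finset.min_of_mem (mem_comp_self hi)
  simp only [compMin, ← h, hc, WithTop.untopD_coe]

theorem compMax_congr (hi : i ∈ G) (h : comp G i = comp G j) : compMax G i = compMax G j := by
  obtain ⟨c, hc⟩ := Finset.max_of_mem (mem_comp_self hi)
  simp only [compMax, ← h, hc, WithBot.unbotD_coe]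

theorem midpt_eq (H : PGraph) (i : ℤ) :
    midpt H i = ((compMin H i : ℝ) - 1 + compMax H i) / 2 := rfl

theorem midpt_congr (hi : i ∈ G) (h : comp G i = comp G j) : midpt G i = midpt G j := by
  rw [midpt_eq, midpt_eq, compMin_congr hi h, compMax_congr hi h]

theorem mem_leftEnds : r ∈ leftEnds G ↔ r ∈ G ∧ r - 1 ∉ G := Finset.mem_filter

theorem Delta_eq_card_leftEnds : Delta G = (leftEnds G).card := rfl

theorem compMin_eq_of_mem_leftEnds (hr : r ∈ leftEnds G) : compMin G r = r := by
  rw [mem_leftEnds] at hr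
  by_contra hne
  have hlt : compMin G r < r := lt_of_le_of_ne (compMin_le hr.1) hne
  exact hr.2 (Icc_compMin_compMax_subset hr.1 (Finset.mem_Icc.2 ⟨by omega, by
    have := le_compMax hr.1; omega⟩))

theorem compMin_mem_leftEnds (h : i ∈ G) : compMin G i ∈ leftEnds G :=
  mem_leftEnds.2 ⟨comp_subset (compMin_mem h), compMin_sub_one_notMem h⟩

theorem exists_mem_leftEnds_comp_eq (h : i ∈ G) : ∃ r ∈ leftEnds G, comp G r = comp G i :=
  ⟨compMin G i, compMin_mem_leftEnds h, comp_eq_of_mem (compMin_mem h)⟩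

theorem card_comp_of_mem_leftEnds (hr : r ∈ leftEnds G) :
    ((comp G r).card : ℤ) = compMax G r - r + 1 := by
  have hG := (mem_leftEnds.1 hr).1
  rw [comp_eq_Icc hG, compMin_eq_of_mem_leftEnds hr, Int.card_Icc,
    Int.toNat_of_nonneg (by have := le_compMax hG; omega)]
  ring

theorem card_comp_le_lam (h : i ∈ G) : (comp G i).card ≤ lam G :=
  Finset.le_sup (f := fun i => (comp G i).card) h

theorem compMin_eq_and_compMax_eq_of_le (hi : i ∈ G) (hj : j ∈ G)
    (h₁ : compMin G i ≤ compMax G j) (h₂ : compMin G j ≤ compMax G i) :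
    compMin G i = compMin G j ∧ compMax G i = compMax G j := by
  have hIi := Icc_compMin_compMax_subset hi
  have hIj := Icc_compMin_compMax_subset hj
  have := compMin_le hi; have := le_compMax hi; have := compMin_le hj; have := le_compMax hj
  refine ⟨le_antisymm ?_ ?_, le_antisymm ?_ ?_⟩ <;> by_contra hlt
  · exact compMin_sub_one_notMem hi (hIj (Finset.mem_Icc.2 (by omega)))
  · exact compMin_sub_one_notMem hj (hIi (Finset.mem_Icc.2 (by omega)))
  · exact compMax_add_one_notMem hj (hIi (Finset.mem_Icc.2 (by omega)))
  · exact compMax_add_one_notMem hi (hIj (Finset.mem_Icc.2 (by omega)))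

theorem compMax_lt_compMin_of_midpt_lt (hi : i ∈ G) (hj : j ∈ G)
    (h : midpt G i < midpt G j) : compMax G i < compMin G j := by
  rw [midpt_eq, midpt_eq] at h
  have hsum : compMin G i + compMax G i < compMin G j + compMax G j := by
    exact_mod_cast (by linarith : (compMin G i : ℝ) + compMax G i < compMin G j + compMax G j)
  by_contra hle
  have := compMin_le hi; have := le_compMax hi; have := compMin_le hj; have := le_compMax hj
  by_cases h₁ : compMin G i ≤ compMax G j
  · have := compMin_eq_and_compMax_eq_of_le hi hj h₁ (by omega)
    omega
  · omega

end Components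

section Ominus

variable {X E F F₁ F₂ Y : PGraph} {i j r : ℤ}

theorem mem_ominus :
    i ∈ ominus X F ↔ i ∈ X ∧ ∀ j ∈ comp X i, ∀ f ∈ F, 1 < (j - f).natAbs :=
  Finset.mem_filter

theorem ominus_subset : ominus X F ⊆ X := Finset.filter_subset _ _

theorem ominus_empty (X : PGraph) : ominus X ∅ = X :=
  Finset.filter_true_of_mem fun _ _ _ _ f hf => absurd hf (Finset.notMem_empty f)

theorem ominus_eq_empty_of_subset (h : X ⊆ F) : ominus X F = ∅ :=
  Finset.eq_empty_of_forall_notMem fun i hi => by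
    have hi := mem_ominus.1 hi
    simpa using hi.2 i (mem_comp_self hi.1) i (h hi.1)

theorem ominus_anti (h : F₁ ⊆ F₂) : ominus X F₂ ⊆ ominus X F₁ := fun i hi => by
  rw [mem_ominus] at hi ⊢
  exact ⟨hi.1, fun j hj f hf => hi.2 j hj f (h hf)⟩

theorem ominus_union : ominus X (E ∪ F) = ominus X E ∩ ominus X F := by
  ext i
  simp only [Finset.mem_inter, mem_ominus, Finset.mem_union]
  grind

theorem mem_ominus_of_mem_comp (hi : i ∈ ominus X F) (hj : j ∈ comp X i) : j ∈ ominus X F := by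
  rw [mem_ominus] at hi ⊢
  refine ⟨comp_subset hj, ?_⟩
  rw [comp_eq_of_mem hj]
  exact hi.2

theorem comp_ominus (hi : i ∈ ominus X F) : comp (ominus X F) i = comp X i := by
  refine (comp_mono ominus_subset).antisymm fun j hj => mem_comp.2
    ⟨mem_ominus_of_mem_comp hi hj, fun l h₁ h₂ => mem_ominus_of_mem_comp hi ?_⟩
  have hX := ominus_subset hi
  have hi' := mem_comp_self hX
  rw [comp_eq_Icc hX, Finset.mem_Icc] at hj hi' ⊢
  omega

theorem midpt_ominus (hi : i ∈ ominus X F) : midpt (ominus X F) i = midpt X i := by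
  simp only [midpt, comp_ominus hi]

theorem mem_ominus_of_comp_subset (hr : r ∈ X) (hsub : comp X r ⊆ comp Y r)
    (h : r ∈ ominus Y E) : r ∈ ominus X E :=
  mem_ominus.2 ⟨hr, fun j hj => (mem_ominus.1 h).2 j (hsub hj)⟩

theorem sub_one_mem_ominus (hi : i ∈ ominus X F) (h : i - 1 ∈ X) : i - 1 ∈ ominus X F :=
  mem_ominus_of_mem_comp hi (sub_one_mem_comp (ominus_subset hi) h)

theorem Delta_ominus_anti (h : F₁ ⊆ F₂) : Delta (ominus X F₂) ≤ Delta (ominus X F₁) := by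
  rw [Delta_eq_card_leftEnds, Delta_eq_card_leftEnds]
  refine Finset.card_le_card fun r hr => ?_
  rw [mem_leftEnds] at hr ⊢
  exact ⟨ominus_anti h hr.1, fun h' => hr.2 (sub_one_mem_ominus hr.1 (ominus_subset h'))⟩

theorem exists_near_of_notMem_ominus (hi : i ∈ X) (h : i ∉ ominus X F) :
    ∃ f ∈ F, compMin X i ≤ f + 1 ∧ f ≤ compMax X i + 1 := by
  simp only [mem_ominus, hi, true_and, not_forall, not_lt] at h
  obtain ⟨l, hl, f, hf, hlf⟩ := h
  rw [comp_eq_Icc hi, Finset.mem_Icc] at hl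
  exact ⟨f, hf, by omega, by omega⟩

end Ominus

open MeasureTheory in
theorem le_sum_sub_of_Icc_subset_biUnion {ι : Type*} {A : Finset ι} {lo up : ι → ℝ} {a b : ℝ}
    (hle : ∀ i ∈ A, lo i ≤ up i) (h : Set.Icc a b ⊆ ⋃ i ∈ A, Set.Icc (lo i) (up i)) :
    b - a ≤ ∑ i ∈ A, (up i - lo i) := by
  have hnonneg : ∀ i ∈ A, 0 ≤ up i - lo i := fun i hi => sub_nonneg.2 (hle i hi)
  rw [← ENNReal.ofReal_le_ofReal_iff (Finset.sum_nonneg hnonneg), ← Real.volume_Icc,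
    ENNReal.ofReal_sum_of_nonneg hnonneg]
  calc volume (Set.Icc a b) ≤ volume (⋃ i ∈ A, Set.Icc (lo i) (up i)) := measure_mono h
    _ ≤ ∑ i ∈ A, volume (Set.Icc (lo i) (up i)) := measure_biUnion_finset_le A _
    _ = ∑ i ∈ A, ENNReal.ofReal (up i - lo i) := by simp only [Real.volume_Icc]

/-- Models the vertex intervals `[compMin - 1, compMax]` of the components of a subgraph of
`Path_k` (`isGapPacking_of_subset_pathk`); on the real line the mirror image `x ↦ k - x` is
available (`reflect`). -/
structure IsGapPacking {ι : Type*} (A : Finset ι) (s t : ι → ℝ) (k g : ℝ) : Prop where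
  left_le_right : ∀ i ∈ A, s i ≤ t i
  nonneg : ∀ i ∈ A, 0 ≤ s i
  right_le : ∀ i ∈ A, t i ≤ k
  right_le_left_of_mid_lt : ∀ i ∈ A, ∀ j ∈ A, s i + t i < s j + t j → t i ≤ s j
  exists_mid_near : ∀ z ∈ Set.Icc 0 k, ∃ i ∈ A, |(s i + t i) / 2 - z| ≤ g

namespace IsGapPacking

variable {ι : Type*} {A : Finset ι} {s t : ι → ℝ} {k g : ℝ} {S : Set ι} {E : Set ℝ} {c : ι}
  {y : ℝ}

theorem reflect (h : IsGapPacking A s t k g) :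
    IsGapPacking A (fun i => k - t i) (fun i => k - s i) k g where
  left_le_right i hi := by linarith [h.left_le_right i hi]
  nonneg i hi := by linarith [h.right_le i hi]
  right_le i hi := by linarith [h.nonneg i hi]
  right_le_left_of_mid_lt i hi j hj hij := by
    linarith [h.right_le_left_of_mid_lt j hj i hi (by linarith)]
  exists_mid_near z hz := by
    obtain ⟨i, hi, hiz⟩ := h.exists_mid_near (k - z) ⟨by linarith [hz.2], by linarith [hz.1]⟩
    exact ⟨i, hi, by rw [← abs_neg]; convert hiz using 2; ring⟩

theorem exists_mid_lt_within (h : IsGapPacking A s t k g) (hc : c ∈ A)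
    (hgc : g < (s c + t c) / 2) :
    ∃ q ∈ A, s q + t q < s c + t c ∧ (s c + t c) / 2 - (s q + t q) / 2 ≤ 2 * g := by
  have hmid : ∀ i ∈ A, (s i + t i) / 2 ∈ Set.Icc 0 k := fun i hi => by
    have := h.left_le_right i hi
    exact ⟨by linarith [h.nonneg i hi], by linarith [h.right_le i hi]⟩
  obtain ⟨p, hp, hp0⟩ := h.exists_mid_near 0 ⟨le_rfl, (hmid c hc).1.trans (hmid c hc).2⟩
  have hpc : s p + t p < s c + t c := by linarith [le_abs_self ((s p + t p) / 2 - 0)]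
  obtain ⟨q, hq, hqmax⟩ := Finset.exists_max_image (A.filter fun i => s i + t i < s c + t c)
    (fun i => s i + t i) ⟨p, Finset.mem_filter.2 ⟨hp, hpc⟩⟩
  rw [Finset.mem_filter] at hq
  obtain ⟨i, hi, hiz⟩ := h.exists_mid_near ((s q + t q) / 2 / 2 + (s c + t c) / 2 / 2)
    ⟨by linarith [(hmid q hq.1).1, (hmid c hc).1], by linarith [(hmid q hq.1).2, (hmid c hc).2]⟩
  refine ⟨q, hq.1, hq.2, ?_⟩
  rw [abs_le] at hiz
  rcases lt_or_ge (s i + t i) (s c + t c) with hic | hci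
  · linarith [hqmax i (Finset.mem_filter.2 ⟨hi, hic⟩)]
  · linarith

/-- The interval `q` whose midpoint precedes that of `c` is close enough to `y` that it either
lies in `S` or touches an edge near `y`. -/
theorem exists_near_of_lt_right (h : IsGapPacking A s t k g)
    (hlost : ∀ i ∈ A, i ∉ S → ∃ a ∈ E, a ≤ t i ∧ s i ≤ a + 1) (hc : c ∈ A)
    (hcy : |(s c + t c) / 2 - y| ≤ g) (hyc : y + 2 * g < t c) :
    (∃ i ∈ S, |(s i + t i) / 2 - y| ≤ 2 * g) ∨ ∃ a ∈ E, a ≤ y + 2 * g ∧ y - 2 * g ≤ a + 1 := by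
  have hg : 0 ≤ g := (abs_nonneg _).trans hcy
  rw [abs_le] at hcy
  obtain ⟨q, hq, hqc, hcq⟩ := h.exists_mid_lt_within hc (by linarith [h.nonneg c hc])
  have htq : t q ≤ s c := h.right_le_left_of_mid_lt q hq c hc hqc
  have hsq := h.left_le_right q hq
  by_cases hqS : q ∈ S
  · exact Or.inl ⟨q, hqS, abs_le.2 ⟨by linarith, by linarith⟩⟩
  · obtain ⟨a, ha, hat, hsa⟩ := hlost q hq hqS
    exact Or.inr ⟨a, ha, by linarith, by linarith⟩

/-- `E` holds the left vertices `a` of edges `[a, a + 1]`; every interval outside `S` touches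
one of these edges. -/
theorem exists_near (h : IsGapPacking A s t k g)
    (hlost : ∀ i ∈ A, i ∉ S → ∃ a ∈ E, a ≤ t i ∧ s i ≤ a + 1) (hy : y ∈ Set.Icc 0 k) :
    (∃ i ∈ S, |(s i + t i) / 2 - y| ≤ 2 * g) ∨ ∃ a ∈ E, a ≤ y + 2 * g ∧ y - 2 * g ≤ a + 1 := by
  obtain ⟨c, hc, hcy⟩ := h.exists_mid_near y hy
  have hg : 0 ≤ g := (abs_nonneg _).trans hcy
  by_cases hcS : c ∈ S
  · exact Or.inl ⟨c, hcS, by linarith⟩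
  obtain ⟨a, ha, hat, hsa⟩ := hlost c hc hcS
  by_cases hright : y + 2 * g < a
  · exact h.exists_near_of_lt_right hlost hc hcy (by linarith)
  by_cases hleft : a + 1 < y - 2 * g
  · -- the mirror image of the previous case under `x ↦ k - x`
    have hreflect : ∀ i x, |(k - t i + (k - s i)) / 2 - (k - x)| = |(s i + t i) / 2 - x| :=
      fun i x => by rw [← abs_neg]; ring_nf
    rcases h.reflect.exists_near_of_lt_right (S := S) (E := {b | k - 1 - b ∈ E}) (y := k - y)
        (fun i hi hiS => by
          obtain ⟨b, hb, hbt, hsb⟩ := hlost i hi hiS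
          exact ⟨k - 1 - b, by simpa using hb, by linarith, by linarith⟩)
        hc (by rwa [hreflect]) (by linarith) with
      ⟨i, hiS, hi⟩ | ⟨b, hb, hby, hyb⟩
    · exact Or.inl ⟨i, hiS, by rwa [hreflect] at hi⟩
    · exact Or.inr ⟨k - 1 - b, hb, by linarith, by linarith⟩
  exact Or.inr ⟨a, ha, by linarith, by linarith⟩

end IsGapPacking

section Gap

variable {k : ℕ} {H F : PGraph} {i d : ℤ} {y : ℝ}

theorem bddAbove_range_sInf_dist_midpt (hne : H.Nonempty) :
    BddAbove (Set.range fun y : Set.Icc (0 : ℝ) k =>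
      sInf ((fun i => |midpt H i - (y : ℝ)|) '' (H : Set ℤ))) := by
  obtain ⟨i₀, hi₀⟩ := hne
  refine ⟨|midpt H i₀| + k, ?_⟩
  rintro _ ⟨⟨y, hy0, hyk⟩, rfl⟩
  calc sInf ((fun i => |midpt H i - y|) '' (H : Set ℤ)) ≤ |midpt H i₀ - y| :=
        csInf_le ⟨0, by rintro _ ⟨_, _, rfl⟩; positivity⟩ ⟨i₀, hi₀, rfl⟩
    _ ≤ |midpt H i₀| + |y| := abs_sub _ _
    _ ≤ |midpt H i₀| + k := by rw [abs_of_nonneg hy0]; linarith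

theorem exists_midpt_near (hne : H.Nonempty) (hy : y ∈ Set.Icc (0 : ℝ) k) :
    ∃ i ∈ H, |midpt H i - y| ≤ gapOf k H := by
  obtain ⟨i, hi, hmin⟩ := ((Finset.coe_nonempty.2 hne).image _).csInf_mem
    ((H.finite_toSet).image fun i => |midpt H i - y|)
  exact ⟨i, hi, hmin.trans_le (le_ciSup (bddAbove_range_sInf_dist_midpt hne) ⟨y, hy⟩)⟩

theorem one_le_compMin (hH : H ⊆ pathk k) (hi : i ∈ H) : 1 ≤ compMin H i :=
  (Finset.mem_Icc.1 (hH (comp_subset (compMin_mem hi)))).1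

theorem compMax_le (hH : H ⊆ pathk k) (hi : i ∈ H) : compMax H i ≤ k :=
  (Finset.mem_Icc.1 (hH (comp_subset (compMax_mem hi)))).2

theorem isGapPacking_of_subset_pathk (hH : H ⊆ pathk k) (hne : H.Nonempty) :
    IsGapPacking H (fun i => (compMin H i : ℝ) - 1) (fun i => (compMax H i : ℝ)) k
      (gapOf k H) where
  left_le_right i hi := by
    have : (compMin H i : ℝ) ≤ compMax H i := by exact_mod_cast compMin_le_compMax hi
    linarith
  nonneg i hi := by
    have : (1 : ℝ) ≤ compMin H i := by exact_mod_cast one_le_compMin hH hi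
    linarith
  right_le i hi := by exact_mod_cast compMax_le hH hi
  right_le_left_of_mid_lt i hi j hj hij := by
    have := compMax_lt_compMin_of_midpt_lt hi hj (by rw [midpt_eq, midpt_eq]; linarith)
    have : (compMax H i : ℝ) + 1 ≤ compMin H j := by exact_mod_cast this
    linarith
  exists_mid_near _ hz := exists_midpt_near hne hz

theorem one_half_le_gapOf (hH : H ⊆ pathk k) (hne : H.Nonempty) : 1 / 2 ≤ gapOf k H := by
  obtain ⟨i, hi, hi0⟩ := exists_midpt_near (k := k) hne ⟨le_rfl, Nat.cast_nonneg k⟩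
  have : (1 : ℝ) ≤ compMin H i := by exact_mod_cast one_le_compMin hH hi
  have : (compMin H i : ℝ) ≤ compMax H i := by exact_mod_cast compMin_le_compMax hi
  rw [midpt_eq, sub_zero, abs_le] at hi0
  linarith

theorem le_two_mul_gapOf_mul_Delta (hH : H ⊆ pathk k) (hne : H.Nonempty) :
    (k : ℝ) ≤ 2 * gapOf k H * Delta H := by
  set g := gapOf k H
  have hcover : Set.Icc (0 : ℝ) k ⊆ ⋃ r ∈ leftEnds H, Set.Icc (midpt H r - g) (midpt H r + g) := by
    intro y hy
    obtain ⟨i, hi, hiy⟩ := exists_midpt_near hne hy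
    obtain ⟨r, hr, hri⟩ := exists_mem_leftEnds_comp_eq hi
    rw [← midpt_congr (mem_leftEnds.1 hr).1 hri, abs_le] at hiy
    exact Set.mem_biUnion hr ⟨by linarith, by linarith⟩
  calc (k : ℝ) = k - 0 := (sub_zero _).symm
    _ ≤ ∑ r ∈ leftEnds H, (midpt H r + g - (midpt H r - g)) :=
      le_sum_sub_of_Icc_subset_biUnion (fun r _ => by linarith [one_half_le_gapOf hH hne]) hcover
    _ = 2 * g * Delta H := by
      rw [Delta_eq_card_leftEnds, Finset.sum_congr rfl fun r _ => (by ring : _ = 2 * g),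
        Finset.sum_const, nsmul_eq_mul, mul_comm]

theorem compMax_sub_add_one_le_lam (hd : d ∈ leftEnds F) : compMax F d - d + 1 ≤ (lam F : ℤ) := by
  rw [← card_comp_of_mem_leftEnds hd]
  exact_mod_cast card_comp_le_lam (mem_leftEnds.1 hd).1

theorem exists_midpt_ominus_near_or_comp_near (hH : H ⊆ pathk k) (hne : H.Nonempty) (F : PGraph)
    (hy : y ∈ Set.Icc (0 : ℝ) k) :
    (∃ r ∈ leftEnds (ominus H F), |midpt (ominus H F) r - y| ≤ 2 * gapOf k H) ∨
      ∃ d ∈ leftEnds F, (d : ℝ) - 1 - 2 * gapOf k H ≤ y ∧ y ≤ compMax F d + 2 * gapOf k H := by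
  have hlost : ∀ i ∈ H, i ∉ (ominus H F : Set ℤ) → ∃ a ∈ (fun f : ℤ => (f : ℝ) - 1) '' ↑F,
      a ≤ compMax H i ∧ (compMin H i : ℝ) - 1 ≤ a + 1 := fun i hi hiF => by
    obtain ⟨f, hf, hmin, hmax⟩ := exists_near_of_notMem_ominus hi hiF
    have : (compMin H i : ℝ) ≤ f + 1 := by exact_mod_cast hmin
    have : (f : ℝ) ≤ compMax H i + 1 := by exact_mod_cast hmax
    exact ⟨f - 1, ⟨f, hf, rfl⟩, by linarith, by linarith⟩
  rcases (isGapPacking_of_subset_pathk hH hne).exists_near hlost hy with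
    ⟨i, hiF, hiy⟩ | ⟨_, ⟨f, hf, rfl⟩, hfy, hyf⟩
  · obtain ⟨r, hr, hri⟩ := exists_mem_leftEnds_comp_eq (Finset.mem_coe.1 hiF)
    refine Or.inl ⟨r, hr, ?_⟩
    rwa [midpt_congr (mem_leftEnds.1 hr).1 hri, midpt_ominus hiF]
  · obtain ⟨d, hd, hdf⟩ := exists_mem_leftEnds_comp_eq hf
    have hfd : f ∈ comp F d := hdf ▸ mem_comp_self hf
    have : (d : ℝ) ≤ f := by exact_mod_cast compMin_eq_of_mem_leftEnds hd ▸ compMin_le_of_mem hfd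
    have : (f : ℝ) ≤ compMax F d := by exact_mod_cast le_compMax_of_mem hfd
    exact Or.inr ⟨d, hd, by linarith, by linarith⟩

theorem le_four_mul_gapOf_mul_add (hH : H ⊆ pathk k) (hne : H.Nonempty) (F : PGraph) :
    (k : ℝ) ≤ 4 * gapOf k H * (Delta (ominus H F) + Delta F) + lam F * Delta F := by
  set g := gapOf k H
  set U := ominus H F
  have hg := one_half_le_gapOf hH hne
  let lo : ℤ ⊕ ℤ → ℝ := Sum.elim (fun r => midpt U r - 2 * g) (fun d => (d : ℝ) - 1 - 2 * g)
  let up : ℤ ⊕ ℤ → ℝ := Sum.elim (fun r => midpt U r + 2 * g) (fun d => compMax F d + 2 * g)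
  have hcover : Set.Icc (0 : ℝ) k ⊆
      ⋃ x ∈ (leftEnds U).disjSum (leftEnds F), Set.Icc (lo x) (up x) := by
    intro y hy
    rcases exists_midpt_ominus_near_or_comp_near hH hne F hy with ⟨r, hr, hry⟩ | ⟨d, hd, hdy, hyd⟩
    · rw [abs_le] at hry
      refine Set.mem_biUnion (Finset.inl_mem_disjSum.2 hr) ⟨?_, ?_⟩ <;>
        simp only [lo, up, Sum.elim_inl] <;> linarith
    · exact Set.mem_biUnion (Finset.inr_mem_disjSum.2 hd) ⟨hdy, hyd⟩
  have hle : ∀ x ∈ (leftEnds U).disjSum (leftEnds F), lo x ≤ up x := by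
    rintro (r | d) hx
    · simp only [lo, up, Sum.elim_inl]; linarith
    · have : (d : ℝ) ≤ compMax F d := by
        exact_mod_cast le_compMax (mem_leftEnds.1 (Finset.inr_mem_disjSum.1 hx)).1
      simp only [lo, up, Sum.elim_inr]
      linarith
  have hsum := le_sum_sub_of_Icc_subset_biUnion hle hcover
  rw [Finset.sum_disjSum] at hsum
  simp only [lo, up, Sum.elim_inl, Sum.elim_inr, sub_zero] at hsum
  have h₁ : ∑ r ∈ leftEnds U, (midpt U r + 2 * g - (midpt U r - 2 * g)) = Delta U * (4 * g) := by
    rw [Delta_eq_card_leftEnds, Finset.sum_congr rfl fun r _ => (by ring : _ = 4 * g),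
      Finset.sum_const, nsmul_eq_mul]
  have h₂ : ∑ d ∈ leftEnds F, ((compMax F d : ℝ) + 2 * g - (d - 1 - 2 * g)) ≤
      Delta F * (lam F + 4 * g) := by
    rw [Delta_eq_card_leftEnds, ← nsmul_eq_mul, ← Finset.sum_const]
    refine Finset.sum_le_sum fun d hd => ?_
    have : ((compMax F d - d + 1 : ℤ) : ℝ) ≤ (lam F : ℤ) := by
      exact_mod_cast compMax_sub_add_one_le_lam hd
    push_cast at this
    linarith
  nlinarith

end Gap

section Sequences

variable {m k : ℕ} {G : Fin m → PGraph} {a b : Fin m} {x : ℤ}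

theorem mem_residUnion : x ∈ residUnion G ↔ ∃ a, x ∈ ominus (G a) (unionBelow G a) := by
  simp [residUnion]

theorem residUnion_subset (hcov : Finset.univ.biUnion G = pathk k) : residUnion G ⊆ pathk k :=
  fun x hx => by
    obtain ⟨a, ha⟩ := mem_residUnion.1 hx
    exact hcov ▸ Finset.mem_biUnion.2 ⟨a, Finset.mem_univ a, ominus_subset ha⟩

theorem residUnion_nonempty (hcov : Finset.univ.biUnion G = pathk k) (hk : 1 ≤ k) :
    (residUnion G).Nonempty := by
  have h1 : (1 : ℤ) ∈ Finset.univ.biUnion G :=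
    hcov ▸ Finset.mem_Icc.2 ⟨le_rfl, by exact_mod_cast hk⟩
  obtain ⟨a, -, ha⟩ := Finset.mem_biUnion.1 h1
  obtain ⟨a₀, ha₀, hmin⟩ := (Finset.univ.filter fun b => (G b).Nonempty).exists_min_image id
    ⟨a, Finset.mem_filter.2 ⟨Finset.mem_univ a, 1, ha⟩⟩
  have hbelow : unionBelow G a₀ = ∅ := Finset.eq_empty_of_forall_notMem fun x hx => by
    obtain ⟨b, hb, hxb⟩ := Finset.mem_biUnion.1 hx
    exact (Finset.mem_filter.1 hb).2.not_ge
      (hmin b (Finset.mem_filter.2 ⟨Finset.mem_univ b, x, hxb⟩))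
  obtain ⟨x, hx⟩ := (Finset.mem_filter.1 ha₀).2
  exact ⟨x, mem_residUnion.2 ⟨a₀, by rwa [hbelow, ominus_empty]⟩⟩

theorem unionBelow_mono (hab : a < b) : unionBelow G a ⊆ unionBelow G b := by
  intro x hx
  simp only [unionBelow, Finset.mem_biUnion, Finset.mem_filter] at hx ⊢
  obtain ⟨c, hc, hxc⟩ := hx
  exact ⟨c, ⟨hc.1, hc.2.trans hab⟩, hxc⟩

theorem subset_unionBelow (hab : a < b) : G a ⊆ unionBelow G b := fun _ hx =>
  Finset.mem_biUnion.2 ⟨a, Finset.mem_filter.2 ⟨Finset.mem_univ a, hab⟩, hx⟩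

theorem sum_Delta_ominus_le_dvecFrom (E : PGraph) :
    ∀ (l : List (Fin m)) (F : PGraph), l.Pairwise (· < ·) →
      (∀ a ∈ l, F ⊆ E ∪ unionBelow G a) →
      (l.map fun a => Delta (ominus (G a) (E ∪ unionBelow G a))).sum ≤ dvecFrom F (l.map G)
  | [], _, _, _ => le_rfl
  | a :: l, F, hl, hF => by
    rw [List.pairwise_cons] at hl
    have hhead := Delta_ominus_anti (X := G a) (hF a List.mem_cons_self)
    have htail := sum_Delta_ominus_le_dvecFrom E l (F ∪ G a) hl.2 fun b hb =>
      Finset.union_subset ((hF a List.mem_cons_self).trans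
          (Finset.union_subset_union_right (unionBelow_mono (hl.1 b hb))))
        ((subset_unionBelow (hl.1 b hb)).trans Finset.subset_union_right)
    simp only [List.map_cons, List.sum_cons, dvecFrom]
    omega

theorem Delta_ominus_residUnion_le (E : PGraph) :
    Delta (ominus (residUnion G) E) ≤ ∑ a, Delta (ominus (G a) (E ∪ unionBelow G a)) := by
  rw [Delta_eq_card_leftEnds]
  refine (Finset.card_le_card fun r hr => ?_).trans Finset.card_biUnion_le
  obtain ⟨hrE, hr1⟩ := mem_leftEnds.1 hr
  obtain ⟨a, hra⟩ := mem_residUnion.1 (ominus_subset hrE)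
  have hsub : ominus (G a) (unionBelow G a) ⊆ residUnion G := fun x hx => mem_residUnion.2 ⟨a, hx⟩
  have hcomp : comp (G a) r ⊆ comp (residUnion G) r := comp_ominus hra ▸ comp_mono hsub
  refine Finset.mem_biUnion.2 ⟨a, Finset.mem_univ a, mem_leftEnds.2 ⟨?_, fun h => ?_⟩⟩
  · rw [ominus_union]
    exact Finset.mem_inter.2 ⟨mem_ominus_of_comp_subset (ominus_subset hra) hcomp hrE, hra⟩
  · exact hr1 (sub_one_mem_ominus hrE (hsub (ominus_anti Finset.subset_union_right h)))

theorem Delta_residUnion_le_dvec : Delta (residUnion G) ≤ dvec (seqList G) := by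
  have h := Delta_ominus_residUnion_le (G := G) ∅
  rw [ominus_empty, Fin.sum_univ_def] at h
  simp only [Finset.empty_union] at h
  rw [dvec, seqList]
  have h' := sum_Delta_ominus_le_dvecFrom (G := G) ∅ (List.finRange m) ∅
    (List.pairwise_lt_finRange m) fun a _ => Finset.empty_subset _
  simp only [Finset.empty_union] at h'
  exact h.trans h'

theorem Delta_ominus_residUnion_add_Delta_le_dvec (j : Fin m) :
    Delta (ominus (residUnion G) (G j)) + Delta (G j) ≤
      dvec (G j :: ((List.finRange m).filter fun a => a ≠ j).map G) := by
  set l := (List.finRange m).filter fun a => a ≠ j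
  set f := fun a => Delta (ominus (G a) (G j ∪ unionBelow G a))
  have hf : ∀ a ∈ (List.finRange m).filter (fun a => ¬a ≠ j), f a = 0 := fun a ha => by
    obtain rfl : a = j := by simpa using ha
    simp [f, ominus_eq_empty_of_subset Finset.subset_union_left, Delta]
  have h₁ : Delta (ominus (residUnion G) (G j)) ≤ (l.map f).sum := by
    calc Delta (ominus (residUnion G) (G j)) ≤ ∑ a, f a := Delta_ominus_residUnion_le (G j)
      _ = (l.map f).sum := by
        have h₀ : (((List.finRange m).filter fun a => ¬a ≠ j).map f).sum = 0 :=
          List.sum_eq_zero fun x hx => by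
            obtain ⟨a, ha, rfl⟩ := List.mem_map.1 hx
            exact hf a ha
        rw [Fin.sum_univ_def, ← List.sum_map_filter_add_sum_map_filter_not (· ≠ j), h₀,
          add_zero]
  have h₂ := sum_Delta_ominus_le_dvecFrom (G := G) (G j) l (G j)
    ((List.pairwise_lt_finRange m).filter _) fun a _ => Finset.subset_union_left
  rw [dvec, dvecFrom, ominus_empty, Finset.empty_union]
  have := h₁.trans h₂
  omega

end Sequences

/-- **Lemma 5.9.**  Let `G_1 ∪ ⋯ ∪ G_m = Path_k` and `g := gap(G_1,…,G_m)`.  Then `g > 0`,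
(i) `Δ⃗(G_1,…,G_m) ≥ k/(2g)`, and (ii) for every `j`,
`Δ⃗(G_j,G_1,…,G_{j-1},G_{j+1},…,G_m) ≥ (k − λ(G_j)·Δ(G_j))/(4g)`. -/
theorem gap_lemma (k m : ℕ) (hk : 1 ≤ k) (G : Fin m → PGraph)
    (hcov : Finset.univ.biUnion G = pathk k) :
    0 < gapSeq k G ∧
    ((k : ℝ) / (2 * gapSeq k G) ≤ (dvec (seqList G) : ℝ)) ∧
    (∀ j : Fin m,
      ((k : ℝ) - (lam (G j) : ℝ) * (Delta (G j) : ℝ)) / (4 * gapSeq k G) ≤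
        (dvec (G j :: (((List.finRange m).filter fun a => a ≠ j).map G)) : ℝ)) := by
  have hH := residUnion_subset hcov
  have hne := residUnion_nonempty hcov hk
  have hg : 1 / 2 ≤ gapSeq k G := one_half_le_gapOf hH hne
  refine ⟨by linarith, ?_, fun j => ?_⟩
  · have hbound : (k : ℝ) ≤ 2 * gapSeq k G * Delta (residUnion G) :=
      le_two_mul_gapOf_mul_Delta hH hne
    have hcount : (Delta (residUnion G) : ℝ) ≤ dvec (seqList G) := by
      exact_mod_cast Delta_residUnion_le_dvec
    rw [div_le_iff₀ (by linarith)]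
    nlinarith
  · have hbound : (k : ℝ) ≤ 4 * gapSeq k G * (Delta (ominus (residUnion G) (G j)) + Delta (G j)) +
        lam (G j) * Delta (G j) := le_four_mul_gapOf_mul_add hH hne (G j)
    have hcount : (Delta (ominus (residUnion G) (G j)) : ℝ) + Delta (G j) ≤
        dvec (G j :: (((List.finRange m).filter fun a => a ≠ j).map G)) := by
      exact_mod_cast Delta_ominus_residUnion_add_Delta_le_dvec j
    rw [div_le_iff₀ (by linarith)]
    nlinarith
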